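/- Let |ψ⟩ ∈ ℂ²⊗ℂ²⊗ℂ²⊗H be a unit vector satisfying (−1)^{l₁} X⊗X⊗X⊗1 |ψ⟩ = |ψ⟩, (−1)^{l₁+l₂} Z⊗Z⊗1⊗1 |ψ⟩ = |ψ⟩, and (−1)^{l₁+l₃} Z⊗1⊗Z⊗1 |ψ⟩ = |ψ⟩ for some bits l₁,l₂,l₃ ∈ {0,1}. Then |ψ⟩ = |φ_l⟩ ⊗ |χ⟩ for some unit vector |χ⟩ ∈ H, where |φ_l⟩ = (|l₁l₂l₃⟩ + (−1)^{l₁}|l̄₁l̄₂l̄₃⟩)/√2. -/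
import Mathlib


open Matrix Finset
open scoped Kronecker

noncomputable section

abbrev Q3 := Fin 2 × Fin 2 × Fin 2

def inn {n : Type*} [Fintype n] (v w : n → ℂ) : ℂ := ∑ i, star (v i) * w i

def PX : Matrix (Fin 2) (Fin 2) ℂ := !![0, 1; 1, 0]
def PZ : Matrix (Fin 2) (Fin 2) ℂ := !![1, 0; 0, -1]

def flip2 (i : Fin 2) : Fin 2 := if i = 0 then 1 else 0

/-- The GHZ-like state `|φ_l⟩ = (|l₁l₂l₃⟩ + (-1)^{l₁} |l̄₁l̄₂l̄₃⟩)/√2`. -/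
def ghz (l : Q3) : Q3 → ℂ := fun x =>
  (1 / Real.sqrt 2 : ℝ) *
    ((if x = l then 1 else 0)
      + (-1 : ℂ) ^ (l.1 : ℕ) *
        (if x = (flip2 l.1, flip2 l.2.1, flip2 l.2.2) then 1 else 0))

lemma flip2_ne (i : Fin 2) : flip2 i ≠ i := by fin_cases i <;> decide

lemma sqrt2_ne : ((Real.sqrt 2 : ℝ) : ℂ) ≠ 0 :=
  Complex.ofReal_ne_zero.mpr (by positivity)

lemma sqrt2_inv_sq : (((Real.sqrt 2 : ℝ) : ℂ))⁻¹ ^ 2 = 1/2 := by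
  have h : ((Real.sqrt 2 : ℝ) : ℂ) ^ 2 = 2 := by
    rw [← Complex.ofReal_pow, Real.sq_sqrt (by norm_num : (0:ℝ) ≤ 2)]
    norm_num
  rw [inv_pow, h]
  norm_num

lemma sqrt2_mul_inv : ((Real.sqrt 2 : ℝ) : ℂ) * (((Real.sqrt 2 : ℝ) : ℂ))⁻¹ = 1 :=
  mul_inv_cancel₀ sqrt2_ne

lemma ghz_norm (l1 l2 l3 : Fin 2) :
    ∑ a : Fin 2, ∑ b : Fin 2, ∑ c : Fin 2,
      star (ghz (l1,l2,l3) (a,b,c)) * ghz (l1,l2,l3) (a,b,c) = 1 := by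
  fin_cases l1 <;> fin_cases l2 <;> fin_cases l3 <;>
    simp [ghz, flip2, Fin.sum_univ_two, Complex.star_def, Complex.conj_ofReal,
      Complex.ofReal_div, Complex.ofReal_one] <;>
    linear_combination (2:ℂ) * sqrt2_inv_sq

lemma mulVec_XXX {nH : Type*} [Fintype nH] [DecidableEq nH]
    (ψ : Fin 2 × Fin 2 × Fin 2 × nH → ℂ) (a b c : Fin 2) (h : nH) :
    (PX ⊗ₖ (PX ⊗ₖ (PX ⊗ₖ (1 : Matrix nH nH ℂ)))).mulVec ψ (a,b,c,h)
      = ψ (flip2 a, flip2 b, flip2 c, h) := by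
  simp [Matrix.mulVec, dotProduct, Fintype.sum_prod_type, PX, Matrix.one_apply,
    Fin.sum_univ_two, mul_ite, ite_and]
  fin_cases a <;> fin_cases b <;> fin_cases c <;> simp [flip2]

lemma mulVec_ZZ {nH : Type*} [Fintype nH] [DecidableEq nH]
    (ψ : Fin 2 × Fin 2 × Fin 2 × nH → ℂ) (a b c : Fin 2) (h : nH) :
    (PZ ⊗ₖ (PZ ⊗ₖ ((1 : Matrix (Fin 2) (Fin 2) ℂ) ⊗ₖ (1 : Matrix nH nH ℂ)))).mulVec ψ (a,b,c,h)
      = (-1:ℂ)^(a:ℕ) * (-1:ℂ)^(b:ℕ) * ψ (a,b,c,h) := by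
  simp [Matrix.mulVec, dotProduct, Fintype.sum_prod_type, PZ, Matrix.one_apply,
    Fin.sum_univ_two, mul_ite, ite_and]
  fin_cases a <;> fin_cases b <;> simp

lemma mulVec_ZIZ {nH : Type*} [Fintype nH] [DecidableEq nH]
    (ψ : Fin 2 × Fin 2 × Fin 2 × nH → ℂ) (a b c : Fin 2) (h : nH) :
    (PZ ⊗ₖ ((1 : Matrix (Fin 2) (Fin 2) ℂ) ⊗ₖ (PZ ⊗ₖ (1 : Matrix nH nH ℂ)))).mulVec ψ (a,b,c,h)
      = (-1:ℂ)^(a:ℕ) * (-1:ℂ)^(c:ℕ) * ψ (a,b,c,h) := by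
  simp [Matrix.mulVec, dotProduct, Fintype.sum_prod_type, PZ, Matrix.one_apply,
    Fin.sum_univ_two, mul_ite, ite_and]
  fin_cases a <;> fin_cases c <;> simp [mul_comm]

/-- A unit vector stabilized by the three signed stabilizers factorizes as
`|φ_l⟩ ⊗ |χ⟩` for some unit vector `|χ⟩`. -/
theorem stmt_12 {nH : Type*} [Fintype nH] [DecidableEq nH]
    (ψ : Fin 2 × Fin 2 × Fin 2 × nH → ℂ) (l1 l2 l3 : Fin 2)
    (hunit : inn ψ ψ = 1)
    (h1 : ((-1 : ℂ) ^ (l1 : ℕ)) •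
      ((PX ⊗ₖ (PX ⊗ₖ (PX ⊗ₖ (1 : Matrix nH nH ℂ)))).mulVec ψ) = ψ)
    (h2 : ((-1 : ℂ) ^ ((l1 : ℕ) + (l2 : ℕ))) •
      ((PZ ⊗ₖ (PZ ⊗ₖ ((1 : Matrix (Fin 2) (Fin 2) ℂ) ⊗ₖ (1 : Matrix nH nH ℂ)))).mulVec ψ) = ψ)
    (h3 : ((-1 : ℂ) ^ ((l1 : ℕ) + (l3 : ℕ))) •
      ((PZ ⊗ₖ ((1 : Matrix (Fin 2) (Fin 2) ℂ) ⊗ₖ (PZ ⊗ₖ (1 : Matrix nH nH ℂ)))).mulVec ψ) = ψ) :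
    ∃ χ : nH → ℂ, inn χ χ = 1 ∧
      ψ = fun x => ghz (l1, l2, l3) (x.1, x.2.1, x.2.2.1) * χ x.2.2.2 := by
  have e1 : ∀ (a b c : Fin 2) (h : nH),
      (-1:ℂ)^(l1:ℕ) * ψ (flip2 a, flip2 b, flip2 c, h) = ψ (a,b,c,h) := by
    intro a b c h
    have := congrFun h1 (a,b,c,h)
    rwa [Pi.smul_apply, smul_eq_mul, mulVec_XXX] at this
  have e2 : ∀ (a b c : Fin 2) (h : nH),
      (-1:ℂ)^((l1:ℕ)+(l2:ℕ)) * ((-1:ℂ)^(a:ℕ) * (-1:ℂ)^(b:ℕ) * ψ (a,b,c,h)) = ψ (a,b,c,h) := by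
    intro a b c h
    have := congrFun h2 (a,b,c,h)
    rwa [Pi.smul_apply, smul_eq_mul, mulVec_ZZ] at this
  have e3 : ∀ (a b c : Fin 2) (h : nH),
      (-1:ℂ)^((l1:ℕ)+(l3:ℕ)) * ((-1:ℂ)^(a:ℕ) * (-1:ℂ)^(c:ℕ) * ψ (a,b,c,h)) = ψ (a,b,c,h) := by
    intro a b c h
    have := congrFun h3 (a,b,c,h)
    rwa [Pi.smul_apply, smul_eq_mul, mulVec_ZIZ] at this
  clear h1 h2 h3
  have F0 : ∀ (a b c : Fin 2) (h : nH), (a,b,c) ≠ ((l1,l2,l3) : Q3) →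
      (a,b,c) ≠ ((flip2 l1, flip2 l2, flip2 l3) : Q3) → ψ (a,b,c,h) = 0 := by
    intro a b c h hne1 hne2
    have E2 := e2 a b c h
    have E3 := e3 a b c h
    clear e1 e2 e3 hunit
    fin_cases a <;> fin_cases b <;> fin_cases c <;> fin_cases l1 <;> fin_cases l2 <;>
      fin_cases l3 <;> simp_all [flip2] <;>
      first
        | linear_combination (-1/2 : ℂ) * E2
        | linear_combination (-1/2 : ℂ) * E3
  have F1 : ∀ h : nH, ψ (flip2 l1, flip2 l2, flip2 l3, h)
      = (-1:ℂ)^(l1:ℕ) * ψ (l1,l2,l3,h) := by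
    intro h
    have hthis := e1 l1 l2 l3 h
    have hsq : (-1:ℂ)^(l1:ℕ) * (-1:ℂ)^(l1:ℕ) = 1 := by fin_cases l1 <;> norm_num
    linear_combination ((-1:ℂ)^(l1:ℕ)) * hthis
      - ψ (flip2 l1, flip2 l2, flip2 l3, h) * hsq
  set χ : nH → ℂ := fun h => ((Real.sqrt 2 : ℝ) : ℂ) * ψ (l1,l2,l3,h) with hχ
  have hψ : ψ = fun x => ghz (l1, l2, l3) (x.1, x.2.1, x.2.2.1) * χ x.2.2.2 := by
    funext x
    obtain ⟨a, b, c, h⟩ := x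
    show ψ (a,b,c,h) = ghz (l1,l2,l3) (a,b,c) * χ h
    by_cases hx1 : (a,b,c) = ((l1,l2,l3) : Q3)
    · obtain ⟨rfl, rfl, rfl⟩ : a = l1 ∧ b = l2 ∧ c = l3 := by
        simpa [Prod.ext_iff] using hx1
      have hne : ((a,b,c) : Q3) ≠ (flip2 a, flip2 b, flip2 c) :=
        fun hcon => flip2_ne a (congrArg Prod.fst hcon).symm
      simp [ghz, hχ, hne, Complex.ofReal_div, Complex.ofReal_one]
      try linear_combination (-(ψ (a,b,c,h))) * sqrt2_mul_inv
    · by_cases hx2 : (a,b,c) = ((flip2 l1, flip2 l2, flip2 l3) : Q3)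
      · obtain ⟨rfl, rfl, rfl⟩ : a = flip2 l1 ∧ b = flip2 l2 ∧ c = flip2 l3 := by
          simpa [Prod.ext_iff] using hx2
        have hne : ((flip2 l1, flip2 l2, flip2 l3) : Q3) ≠ (l1,l2,l3) :=
          fun hcon => flip2_ne l1 (congrArg Prod.fst hcon)
        simp [ghz, hχ, hne, F1 h, Complex.ofReal_div, Complex.ofReal_one]
        try linear_combination (-((-1:ℂ)^(l1:ℕ)) * ψ (l1,l2,l3,h)) * sqrt2_mul_inv
      · simp [ghz, hx1, hx2, F0 a b c h hx1 hx2]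
  have hinner : ∀ a b c : Fin 2,
      (∑ h : nH, star (ghz (l1,l2,l3) (a,b,c) * χ h) * (ghz (l1,l2,l3) (a,b,c) * χ h))
        = (star (ghz (l1,l2,l3) (a,b,c)) * ghz (l1,l2,l3) (a,b,c)) * inn χ χ := by
    intro a b c
    rw [inn, Finset.mul_sum]
    apply Finset.sum_congr rfl
    intro h _
    rw [star_mul']
    ring
  have hexp : inn ψ ψ = (∑ a : Fin 2, ∑ b : Fin 2, ∑ c : Fin 2,
      star (ghz (l1,l2,l3) (a,b,c)) * ghz (l1,l2,l3) (a,b,c)) * inn χ χ := by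
    conv_lhs => rw [hψ]
    simp only [inn]
    rw [Fintype.sum_prod_type]
    simp only [Fintype.sum_prod_type]
    simp only [hinner]
    simp only [← Finset.sum_mul]
    rw [inn]
  rw [hexp, ghz_norm, one_mul] at hunit
  exact ⟨χ, hunit, hψ⟩
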